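/- Let r, n, m ≥ 1 and let P : ℤ^r → ℂ^{m×n} be the symbol of an m×n system of Fourier multipliers on the torus 𝕋^r. Then the following are equivalent: (i) for every u : ℤ^r → ℂ^n of polynomial growth such that ξ ↦ P(ξ)u(ξ) ∈ ℂ^m is rapidly decreasing, u is itself rapidly decreasing; (ii) there exist C > 0, k ∈ ℝ and a finite set F ⊆ ℤ^r such that λ_min(P(ξ)) ≥ C(1+‖ξ‖²)^{k/2} for all ξ ∈ ℤ^r \ F. -/

import Mathlib

noncomputable section

open scoped BigOperators

/-- Euclidean (ℓ²) norm of a complex vector. -/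
def l2norm {n : Type*} [Fintype n] (v : n → ℂ) : ℝ :=
  Real.sqrt (∑ i, ‖v i‖ ^ 2)

/-- Smallest singular value of a complex matrix, characterized as the infimum of
`‖A v‖₂` over unit vectors `v`. -/
def sminVal {m n : Type*} [Fintype m] [Fintype n] (A : Matrix m n ℂ) : ℝ :=
  sInf {x : ℝ | ∃ v : n → ℂ, l2norm v = 1 ∧ x = l2norm (A.mulVec v)}

/-- The weight `1 + ‖ξ‖²` for a frequency `ξ ∈ ℤ^r`. -/
def wt {r : ℕ} (ξ : Fin r → ℤ) : ℝ :=
  1 + ∑ i, ((ξ i : ℝ)) ^ 2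

/-- A vector-valued sequence indexed by `ℤ^r` is rapidly decreasing. -/
def RapidDecayV {r n : ℕ} (u : (Fin r → ℤ) → (Fin n → ℂ)) : Prop :=
  ∀ M : ℝ, 0 < M → ∃ C : ℝ, 0 < C ∧ ∀ ξ, l2norm (u ξ) ≤ C * wt ξ ^ (-(M / 2))

/-- A vector-valued sequence indexed by `ℤ^r` has polynomial growth. -/
def PolyGrowthV {r n : ℕ} (u : (Fin r → ℤ) → (Fin n → ℂ)) : Prop :=
  ∃ C N : ℝ, 0 < C ∧ 0 < N ∧ ∀ ξ, l2norm (u ξ) ≤ C * wt ξ ^ (N / 2)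

/-!
Write `⟨ξ⟩ = (1 + ‖ξ‖²)^{1/2}`. If `λ_min(P ξ) ≥ C ⟨ξ⟩^k` off a finite set, then
`‖u ξ‖ ≤ C⁻¹ ⟨ξ⟩^{-k} ‖P(ξ) u(ξ)‖` there, so the decay of `P u` passes to `u` at the cost of `|k|`
powers of `⟨ξ⟩`. Conversely, if no such bound holds, there are frequencies `ξ_j → ∞` and unit
vectors `v_j` with `‖P(ξ_j) v_j‖ < ⟨ξ_j⟩^{-2j}`; the sequence equal to `v_j` at `ξ_j` and `0`
elsewhere is bounded and not rapidly decreasing, while `P u` is rapidly decreasing.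
-/

open Filter
open scoped Matrix

section L2norm

variable {n m : Type*} [Fintype n] [Fintype m]

lemma l2norm_eq_norm (v : n → ℂ) : l2norm v = ‖WithLp.toLp 2 v‖ :=
  (EuclideanSpace.norm_eq _).symm

lemma l2norm_nonneg (v : n → ℂ) : 0 ≤ l2norm v :=
  Real.sqrt_nonneg _

@[simp]
lemma l2norm_zero : l2norm (0 : n → ℂ) = 0 := by
  simp [l2norm]

lemma l2norm_pos {v : n → ℂ} (hv : v ≠ 0) : 0 < l2norm v := by
  rw [l2norm_eq_norm, norm_pos_iff]
  exact fun h => hv (congrArg WithLp.ofLp h)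

lemma l2norm_smul (c : ℂ) (v : n → ℂ) : l2norm (c • v) = ‖c‖ * l2norm v := by
  rw [l2norm_eq_norm, l2norm_eq_norm, WithLp.toLp_smul, norm_smul]

lemma l2norm_single [DecidableEq n] (i : n) : l2norm (Pi.single i (1 : ℂ)) = 1 := by
  rw [l2norm_eq_norm]
  exact (PiLp.norm_single 2 _ i 1).trans norm_one

lemma sminVal_mul_l2norm_le (A : Matrix m n ℂ) (v : n → ℂ) :
    sminVal A * l2norm v ≤ l2norm (A *ᵥ v) := by
  rcases eq_or_ne v 0 with rfl | hv
  · simp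
  have hc := l2norm_pos hv
  set c := l2norm v
  have hunit : l2norm (((c : ℂ))⁻¹ • v) = 1 := by
    rw [l2norm_smul, norm_inv, Complex.norm_real, Real.norm_of_nonneg hc.le, inv_mul_cancel₀ hc.ne']
  have hbdd : BddBelow {x : ℝ | ∃ w : n → ℂ, l2norm w = 1 ∧ x = l2norm (A *ᵥ w)} :=
    ⟨0, by rintro x ⟨w, -, rfl⟩; exact l2norm_nonneg _⟩
  have hle := csInf_le hbdd ⟨_, hunit, rfl⟩
  rw [Matrix.mulVec_smul, l2norm_smul, norm_inv, Complex.norm_real, Real.norm_of_nonneg hc.le]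
    at hle
  rw [mul_comm]
  exact (le_inv_mul_iff₀ hc).mp hle

lemma exists_l2norm_eq_one_lt_of_sminVal_lt [Nonempty n] {A : Matrix m n ℂ} {b : ℝ}
    (h : sminVal A < b) : ∃ v : n → ℂ, l2norm v = 1 ∧ l2norm (A *ᵥ v) < b := by
  classical
  have hne : {x : ℝ | ∃ w : n → ℂ, l2norm w = 1 ∧ x = l2norm (A *ᵥ w)}.Nonempty :=
    ⟨_, Pi.single (Classical.arbitrary n) 1, l2norm_single _, rfl⟩
  obtain ⟨-, ⟨v, hv, rfl⟩, hlt⟩ := exists_lt_of_csInf_lt hne h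
  exact ⟨v, hv, hlt⟩

end L2norm

section Weight

variable {r n : ℕ}

lemma one_le_wt (ξ : Fin r → ℤ) : 1 ≤ wt ξ :=
  le_add_of_nonneg_right (Finset.sum_nonneg fun _ _ => sq_nonneg _)

lemma wt_pos (ξ : Fin r → ℤ) : 0 < wt ξ :=
  one_pos.trans_le (one_le_wt ξ)

lemma finite_setOf_wt_le (R : ℝ) : {ξ : Fin r → ℤ | wt ξ ≤ R}.Finite := by
  refine (Set.Finite.pi fun _ => Set.finite_Icc (-⌈√R⌉) ⌈√R⌉).subset
    fun ξ (hξ : wt ξ ≤ R) i _ => ?_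
  have hsq : ((ξ i : ℝ)) ^ 2 ≤ R :=
    ((Finset.single_le_sum (f := fun j => ((ξ j : ℝ)) ^ 2) (fun j _ => sq_nonneg _)
      (Finset.mem_univ i)).trans (le_add_of_nonneg_left zero_le_one)).trans hξ
  rw [Set.mem_Icc, ← abs_le]
  exact_mod_cast (Real.abs_le_sqrt hsq).trans (Int.le_ceil _)

lemma rapidDecayV_of_eventually_le {u : (Fin r → ℤ) → (Fin n → ℂ)}
    (h : ∀ M : ℝ, 0 < M → ∃ C : ℝ, ∀ᶠ ξ in cofinite, l2norm (u ξ) ≤ C * wt ξ ^ (-(M / 2))) :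
    RapidDecayV u := by
  intro M hM
  obtain ⟨C, hC⟩ := h M hM
  obtain ⟨D, hD⟩ :=
    ((eventually_cofinite.mp hC).image fun ξ => l2norm (u ξ) * wt ξ ^ (M / 2)).bddAbove
  refine ⟨max (max C D) 1, by positivity, fun ξ => ?_⟩
  have hrpow : 0 ≤ wt ξ ^ (-(M / 2)) := Real.rpow_nonneg (wt_pos ξ).le _
  by_cases hξ : l2norm (u ξ) ≤ C * wt ξ ^ (-(M / 2))
  · exact hξ.trans (by gcongr; exact (le_max_left _ _).trans (le_max_left _ _))
  · calc l2norm (u ξ) = (l2norm (u ξ) * wt ξ ^ (M / 2)) * wt ξ ^ (-(M / 2)) := by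
          rw [mul_assoc, ← Real.rpow_add (wt_pos ξ), add_neg_cancel, Real.rpow_zero, mul_one]
      _ ≤ max (max C D) 1 * wt ξ ^ (-(M / 2)) := by
          gcongr
          exact (hD ⟨ξ, hξ, rfl⟩).trans ((le_max_right _ _).trans (le_max_left _ _))

lemma polyGrowthV_of_bounded {u : (Fin r → ℤ) → (Fin n → ℂ)} {B : ℝ}
    (h : ∀ ξ, l2norm (u ξ) ≤ B) : PolyGrowthV u := by
  refine ⟨max B 1, 2, by positivity, two_pos, fun ξ => ?_⟩
  rw [div_self two_ne_zero, Real.rpow_one]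
  exact (h ξ).trans
    ((le_max_left _ _).trans (le_mul_of_one_le_right (by positivity) (one_le_wt ξ)))

lemma RapidDecayV.finite_setOf_le_l2norm {u : (Fin r → ℤ) → (Fin n → ℂ)} (hu : RapidDecayV u)
    {c : ℝ} (hc : 0 < c) : {ξ | c ≤ l2norm (u ξ)}.Finite := by
  obtain ⟨C, -, hC⟩ := hu 2 two_pos
  refine (finite_setOf_wt_le (C / c)).subset fun ξ (hξ : c ≤ l2norm (u ξ)) => ?_
  have h := hξ.trans (hC ξ)
  rw [div_self two_ne_zero, Real.rpow_neg (wt_pos ξ).le, Real.rpow_one, ← div_eq_mul_inv,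
    le_div_iff₀ (wt_pos ξ)] at h
  exact (le_div_iff₀' hc).mpr h

end Weight

variable {r n m : ℕ} {P : (Fin r → ℤ) → Matrix (Fin m) (Fin n) ℂ}

lemma rapidDecayV_of_sminVal_ge {C k : ℝ} {F : Set (Fin r → ℤ)} (hC : 0 < C) (hF : F.Finite)
    (hP : ∀ ξ, ξ ∉ F → sminVal (P ξ) ≥ C * wt ξ ^ (k / 2)) {u : (Fin r → ℤ) → (Fin n → ℂ)}
    (hPu : RapidDecayV fun ξ => P ξ *ᵥ u ξ) : RapidDecayV u := by
  refine rapidDecayV_of_eventually_le fun M hM => ?_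
  obtain ⟨C₁, hC₁pos, hC₁⟩ := hPu (M + |k|) (by positivity)
  refine ⟨C₁ / C, hF.eventually_cofinite_notMem.mono fun ξ hξ => ?_⟩
  have hw := wt_pos ξ
  have hlow : 0 < C * wt ξ ^ (k / 2) := by positivity
  calc l2norm (u ξ) ≤ C₁ * wt ξ ^ (-((M + |k|) / 2)) / (C * wt ξ ^ (k / 2)) := by
        rw [le_div_iff₀' hlow]
        exact (mul_le_mul_of_nonneg_right (hP ξ hξ) (l2norm_nonneg _)).trans
          ((sminVal_mul_l2norm_le _ _).trans (hC₁ ξ))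
    _ = C₁ / C * wt ξ ^ (-((M + |k|) / 2) - k / 2) := by
        rw [Real.rpow_sub hw]; ring
    _ ≤ C₁ / C * wt ξ ^ (-(M / 2)) := by
        gcongr
        · exact one_le_wt ξ
        · linarith [neg_abs_le k]

lemma exists_seq_sminVal_lt_of_not_bound
    (h : ¬ ∃ (C : ℝ) (k : ℝ) (F : Set (Fin r → ℤ)), 0 < C ∧ F.Finite ∧
        ∀ ξ, ξ ∉ F → sminVal (P ξ) ≥ C * wt ξ ^ (k / 2)) :
    ∃ ξs : ℕ → Fin r → ℤ,
      ∀ j : ℕ, (j : ℝ) < wt (ξs j) ∧ sminVal (P (ξs j)) < wt (ξs j) ^ (-(j : ℝ)) := by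
  push Not at h
  choose ξs hξs using fun j : ℕ => h 1 (-2 * j) _ one_pos (finite_setOf_wt_le j)
  refine ⟨ξs, fun j => ⟨not_le.mp (hξs j).1, ?_⟩⟩
  have h := (hξs j).2
  rwa [one_mul, neg_mul, neg_div, mul_div_cancel_left₀ _ two_ne_zero] at h

lemma exists_polyGrowthV_not_rapidDecayV_of_mulVec_lt {ξs : ℕ → Fin r → ℤ} {v : ℕ → Fin n → ℂ}
    (hξs : ∀ j : ℕ, (j : ℝ) < wt (ξs j)) (hv : ∀ j, l2norm (v j) = 1)
    (hPv : ∀ j : ℕ, l2norm (P (ξs j) *ᵥ v j) < wt (ξs j) ^ (-(j : ℝ))) :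
    ∃ u : (Fin r → ℤ) → (Fin n → ℂ), PolyGrowthV u ∧
      RapidDecayV (fun ξ => P ξ *ᵥ u ξ) ∧ ¬ RapidDecayV u := by
  classical
  let u := (Set.range ξs).indicator fun ξ => v (Function.invFun ξs ξ)
  have hu : ∀ j, u (ξs j) = v (Function.invFun ξs (ξs j)) :=
    fun j => Set.indicator_of_mem (Set.mem_range_self j) _
  have hu0 : ∀ ξ ∉ Set.range ξs, u ξ = 0 := fun ξ hξ => Set.indicator_of_notMem hξ _
  refine ⟨u, polyGrowthV_of_bounded (B := 1) fun ξ => ?_, ?_, fun hdecay => ?_⟩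
  · by_cases hξ : ξ ∈ Set.range ξs
    · obtain ⟨j, rfl⟩ := hξ
      exact (hu j ▸ hv _).le
    · simp [hu0 ξ hξ]
  · refine rapidDecayV_of_eventually_le fun M _ =>
      ⟨1, ((Set.finite_Iio ⌈M / 2⌉₊).image ξs).eventually_cofinite_notMem.mono fun ξ hξ => ?_⟩
    by_cases hrange : ξ ∈ Set.range ξs
    · obtain ⟨j, rfl⟩ := hrange
      set i := Function.invFun ξs (ξs j)
      have hi : ξs i = ξs j := Function.invFun_eq ⟨j, rfl⟩
      have hMi : M / 2 ≤ i := Nat.ceil_le.mp (not_lt.mp fun h => hξ ⟨i, h, hi⟩)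
      have h := (hPv i).le.trans (Real.rpow_le_rpow_of_exponent_le (one_le_wt _) (neg_le_neg hMi))
      rw [hi] at h
      rwa [hu, one_mul]
    · rw [hu0 ξ hrange, Matrix.mulVec_zero, l2norm_zero]
      exact mul_nonneg zero_le_one (Real.rpow_nonneg (wt_pos ξ).le _)
  · obtain ⟨B, hB⟩ := ((hdecay.finite_setOf_le_l2norm one_pos).image wt).bddAbove
    have hbdd : wt (ξs ⌈B⌉₊) ≤ B :=
      hB ⟨ξs ⌈B⌉₊, (hv _).ge.trans_eq (congrArg l2norm (hu _)).symm, rfl⟩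
    linarith [hξs ⌈B⌉₊, Nat.le_ceil B]

theorem system_GH_iff_general (r n m : ℕ) (hn : 1 ≤ n)
    (P : (Fin r → ℤ) → Matrix (Fin m) (Fin n) ℂ) :
    (∀ u : (Fin r → ℤ) → (Fin n → ℂ), PolyGrowthV u →
        RapidDecayV (fun ξ => (P ξ).mulVec (u ξ)) → RapidDecayV u) ↔
      (∃ (C : ℝ) (k : ℝ) (F : Set (Fin r → ℤ)), 0 < C ∧ F.Finite ∧
        ∀ ξ, ξ ∉ F → sminVal (P ξ) ≥ C * wt ξ ^ (k / 2)) := by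
  refine ⟨fun hGH => ?_, fun ⟨C, k, F, hC, hF, hP⟩ u _ => rapidDecayV_of_sminVal_ge hC hF hP⟩
  by_contra hbound
  obtain ⟨ξs, hξs⟩ := exists_seq_sminVal_lt_of_not_bound hbound
  have : Nonempty (Fin n) := ⟨⟨0, hn⟩⟩
  choose v hv hPv using fun j => exists_l2norm_eq_one_lt_of_sminVal_lt (hξs j).2
  obtain ⟨u, hu, hPu, hnot⟩ :=
    exists_polyGrowthV_not_rapidDecayV_of_mulVec_lt (fun j => (hξs j).1) hv hPv
  exact hnot (hGH u hu hPu)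

theorem system_GH_iff (r n m : ℕ) (hr : 1 ≤ r) (hn : 1 ≤ n) (hm : 1 ≤ m)
    (P : (Fin r → ℤ) → Matrix (Fin m) (Fin n) ℂ) :
    (∀ u : (Fin r → ℤ) → (Fin n → ℂ), PolyGrowthV u →
        RapidDecayV (fun ξ => (P ξ).mulVec (u ξ)) → RapidDecayV u) ↔
      (∃ (C : ℝ) (k : ℝ) (F : Set (Fin r → ℤ)), 0 < C ∧ F.Finite ∧
        ∀ ξ, ξ ∉ F → sminVal (P ξ) ≥ C * wt ξ ^ (k / 2)) :=
  system_GH_iff_general r n m hn P
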